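/- Let x₀, x₁ ∈ X be points whose orbits have the same closure, i.e., the closure of Orb(x₀) in X equals the closure of Orb(x₁) in X. Then x₀ is topologically free if and only if x₁ is topologically free. -/

import Mathlib

/-- A (topological) partial action of a discrete group `G` on a topological space `X`:
open sets `Xg g` and homeomorphisms `θ g : Xg g⁻¹ → Xg g` (encoded as globally defined
maps that are continuous on their domains, with continuous inverse `θ g⁻¹`). -/
structure PartialAction (G : Type*) [Group G] (X : Type*) [TopologicalSpace X] where
  Xg : G → Set X
  θ : G → X → X
  isOpen_Xg : ∀ g : G, IsOpen (Xg g)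
  Xg_one : Xg 1 = Set.univ
  θ_one : ∀ x : X, θ 1 x = x
  mapsTo : ∀ g : G, ∀ x ∈ Xg g⁻¹, θ g x ∈ Xg g
  image_inter : ∀ g h : G, θ g '' (Xg g⁻¹ ∩ Xg h) = Xg g ∩ Xg (g * h)
  θ_comp : ∀ g h : G, ∀ x : X, x ∈ Xg h⁻¹ → x ∈ Xg (g * h)⁻¹ → θ g (θ h x) = θ (g * h) x
  continuousOn : ∀ g : G, ContinuousOn (θ g) (Xg g⁻¹)

namespace PartialAction

variable {G : Type*} [Group G] {X : Type*} [TopologicalSpace X]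

/-- `S x₀ = {g ∈ G : x₀ ∈ X_{g⁻¹}}`. -/
def S (P : PartialAction G X) (x₀ : X) : Set G := {g : G | x₀ ∈ P.Xg g⁻¹}

/-- The orbit of `x₀`:  `Orb(x₀) = {θ_g(x₀) : g ∈ S x₀}`. -/
def orbit (P : PartialAction G X) (x₀ : X) : Set X :=
  {y : X | ∃ g : G, x₀ ∈ P.Xg g⁻¹ ∧ P.θ g x₀ = y}

/-- The isotropy group `H x₀ = {g ∈ S x₀ : θ_g(x₀) = x₀}`. -/
def isotropy (P : PartialAction G X) (x₀ : X) : Set G :=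
  {g : G | x₀ ∈ P.Xg g⁻¹ ∧ P.θ g x₀ = x₀}

/-- A point `x₀` is topologically free if for every `g ≠ 1` and every open `V` with
`x₀ ∈ V ⊆ X_{g⁻¹}` there is `y ∈ V ∩ Orb(x₀)` with `θ_g(y) ≠ y`. -/
def TopFreePoint (P : PartialAction G X) (x₀ : X) : Prop :=
  ∀ g : G, g ≠ 1 → ∀ V : Set X, IsOpen V → x₀ ∈ V → V ⊆ P.Xg g⁻¹ →
    ∃ y ∈ V ∩ P.orbit x₀, P.θ g y ≠ y

/-- A point `x` is strongly regular if for every `h` fixing `x` there is an open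
`V` with `x ∈ V ⊆ X_{h⁻¹}` on which `θ_h` is the identity. -/
def StronglyRegular (P : PartialAction G X) (x : X) : Prop :=
  ∀ h : G, x ∈ P.Xg h⁻¹ → P.θ h x = x →
    ∃ V : Set X, IsOpen V ∧ x ∈ V ∧ V ⊆ P.Xg h⁻¹ ∧ ∀ y ∈ V, P.θ h y = y

end PartialAction

/-!
If `θ_g` fixed every orbit point of `x₁` in a neighbourhood `V ⊆ X_{g⁻¹}` of `x₁`, then by
continuity it would fix all of `V ∩ closure (Orb x₁)`. This closure contains `Orb x₀`, and `V`
contains some `θ_k(x₀)` because `x₁ ∈ closure (Orb x₀)`; pulling `V` back along `θ_k` then gives a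
neighbourhood of `x₀` on whose orbit points the conjugate `θ_{k⁻¹gk}` is the identity.
-/

namespace PartialAction

open Set

variable {G X : Type*} [Group G] [TopologicalSpace X] (P : PartialAction G X)
  {g k a b : G} {x y : X}

lemma θ_inv_θ (hx : x ∈ P.Xg g⁻¹) : P.θ g⁻¹ (P.θ g x) = x := by
  simpa [P.θ_one] using P.θ_comp g⁻¹ g x hx (by simp [P.Xg_one])

lemma mem_Xg_mul_inv (hb : y ∈ P.Xg b⁻¹) (ha : P.θ b y ∈ P.Xg a⁻¹) : y ∈ P.Xg (a * b)⁻¹ := by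
  have hb' : P.θ b y ∈ P.Xg b⁻¹⁻¹ := by simpa using P.mapsTo b y hb
  have := (P.image_inter b⁻¹ a⁻¹).subset ⟨P.θ b y, ⟨hb', ha⟩, rfl⟩
  rw [P.θ_inv_θ hb] at this
  simpa [mul_inv_rev] using this.2

lemma θ_θ (hb : y ∈ P.Xg b⁻¹) (ha : P.θ b y ∈ P.Xg a⁻¹) : P.θ a (P.θ b y) = P.θ (a * b) y :=
  P.θ_comp a b y hb (P.mem_Xg_mul_inv hb ha)

lemma self_mem_orbit (x : X) : x ∈ P.orbit x :=
  ⟨1, by simp [P.Xg_one], P.θ_one x⟩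

lemma θ_mem_orbit (hy : y ∈ P.orbit x) (hk : y ∈ P.Xg k⁻¹) : P.θ k y ∈ P.orbit x := by
  obtain ⟨m, hm, rfl⟩ := hy
  exact ⟨k * m, P.mem_Xg_mul_inv hm hk, (P.θ_θ hm hk).symm⟩

lemma conj_fixes (hk : y ∈ P.Xg k⁻¹) (hg : P.θ k y ∈ P.Xg g⁻¹)
    (hfix : P.θ g (P.θ k y) = P.θ k y) :
    y ∈ P.Xg (k⁻¹ * g * k)⁻¹ ∧ P.θ (k⁻¹ * g * k) y = y := by
  have hgk : y ∈ P.Xg (g * k)⁻¹ := P.mem_Xg_mul_inv hk hg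
  have hθgk : P.θ (g * k) y = P.θ k y := by rw [← P.θ_θ hk hg, hfix]
  have hk' : P.θ (g * k) y ∈ P.Xg k⁻¹⁻¹ := by
    rw [hθgk, inv_inv]
    exact P.mapsTo k y hk
  rw [mul_assoc]
  exact ⟨P.mem_Xg_mul_inv hgk hk', by rw [← P.θ_θ hgk hk', hθgk, P.θ_inv_θ hk]⟩

lemma eqOn_id_inter_closure [T2Space X] {V A : Set X} (hV : IsOpen V) (hVg : V ⊆ P.Xg g⁻¹)
    (h : EqOn (P.θ g) id (V ∩ A)) : EqOn (P.θ g) id (V ∩ closure A) :=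
  h.of_subset_closure ((P.continuousOn g).mono (inter_subset_left.trans hVg)) continuousOn_id
    (inter_subset_inter_right V subset_closure) hV.inter_closure

lemma topFreePoint_of_mem_closure_orbit [T2Space X] {x₀ x₁ : X}
    (h₁ : x₁ ∈ closure (P.orbit x₀)) (h₀ : P.orbit x₀ ⊆ closure (P.orbit x₁))
    (H : P.TopFreePoint x₀) : P.TopFreePoint x₁ := by
  intro g hg V hV hx₁ hVg
  by_contra! hfix
  have hfixcl : EqOn (P.θ g) id (V ∩ closure (P.orbit x₁)) :=
    P.eqOn_id_inter_closure hV hVg hfix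
  obtain ⟨_, hzV, k, hk, rfl⟩ := mem_closure_iff.1 h₁ V hV hx₁
  have hconj : ∀ y ∈ P.Xg k⁻¹, P.θ k y ∈ V ∩ P.orbit x₀ →
      y ∈ P.Xg (k⁻¹ * g * k)⁻¹ ∧ P.θ (k⁻¹ * g * k) y = y := fun y hy hyV =>
    P.conj_fixes hy (hVg hyV.1) (hfixcl ⟨hyV.1, h₀ hyV.2⟩)
  set W := (P.Xg k⁻¹ ∩ P.θ k ⁻¹' V) ∩ P.Xg (k⁻¹ * g * k)⁻¹
  have hW : IsOpen W :=
    ((P.continuousOn k).isOpen_inter_preimage (P.isOpen_Xg _) hV).inter (P.isOpen_Xg _)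
  have hx₀W : x₀ ∈ W := ⟨⟨hk, hzV⟩, (hconj x₀ hk ⟨hzV, k, hk, rfl⟩).1⟩
  have hconj_ne : k⁻¹ * g * k ≠ 1 := by
    simpa only [inv_inv] using (conj_eq_one_iff (a := k⁻¹)).not.2 hg
  obtain ⟨y, ⟨⟨⟨hyk, hyV⟩, -⟩, hy⟩, hne⟩ := H _ hconj_ne W hW hx₀W inter_subset_right
  exact hne (hconj y hyk ⟨hyV, P.θ_mem_orbit hy hyk⟩).2

end PartialAction

theorem topFreePoint_of_eq_orbit_closure_general
    {G X : Type*} [Group G] [TopologicalSpace X]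
    [T2Space X]
    (P : PartialAction G X)
    (x₀ x₁ : X) (h : closure (P.orbit x₀) = closure (P.orbit x₁)) :
    P.TopFreePoint x₀ ↔ P.TopFreePoint x₁ := by
  have h₁ : x₁ ∈ closure (P.orbit x₀) := h ▸ subset_closure (P.self_mem_orbit x₁)
  have h₀ : x₀ ∈ closure (P.orbit x₁) := h ▸ subset_closure (P.self_mem_orbit x₀)
  exact ⟨P.topFreePoint_of_mem_closure_orbit h₁ (h ▸ subset_closure),
    P.topFreePoint_of_mem_closure_orbit h₀ (h ▸ subset_closure)⟩

/-- Two points whose orbits have the same closure are simultaneously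
topologically free or not. -/
theorem topFreePoint_of_eq_orbit_closure
    {G X : Type*} [Group G] [TopologicalSpace X]
    [T2Space X] [LocallyCompactSpace X] [TotallyDisconnectedSpace X]
    (P : PartialAction G X) (hclopen : ∀ g : G, IsClopen (P.Xg g))
    (x₀ x₁ : X) (h : closure (P.orbit x₀) = closure (P.orbit x₁)) :
    P.TopFreePoint x₀ ↔ P.TopFreePoint x₁ :=
  topFreePoint_of_eq_orbit_closure_general P x₀ x₁ h
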